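/- arXiv:1109.4698 — 4 statements merged into one kernel-verified Lean document; each statement's English description precedes it below -/
import Mathlib

section
/- Let n ≥ 2 and let i be an integer with 0 ≤ i < n/2. The two-dimensional subspace of Symⁿρ spanned by v_i and v_{n−i} is stable under ρ(g) for all g ∈ G, and as a representation of G it is isomorphic to (Ind_H^G η^{n−2i}) ⊗ (θ·det ρ)^{i}. -/
open Matrix MvPolynomial
open scoped Classical

/-- Extension of a character `η : H →* Kˣ` to all of `G`, by zero outside `H`. -/
noncomputable def etaExt {K : Type*} [Field K] {G : Type*} [Group G]
    (H : Subgroup G) (η : H →* Kˣ) (g : G) : K :=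
  if h : g ∈ H then ((η ⟨g, h⟩ : Kˣ) : K) else 0

/-- The matrix model of the induced representation `Ind_H^G η'` (for any
character `η'` of `H`). -/
noncomputable def indRep {K : Type*} [Field K] {G : Type*} [Group G]
    (H : Subgroup G) (η : H →* Kˣ) (τ : G) (g : G) : Matrix (Fin 2) (Fin 2) K :=
  if g ∈ H then
    !![etaExt H η g, 0; 0, etaExt H η (τ * g * τ⁻¹)]
  else
    !![0, etaExt H η (g * τ⁻¹); etaExt H η (τ * g), 0]

/-- The substitution action of a 2×2 matrix on polynomials in `x = X 0`,
`y = X 1`, realizing the symmetric powers on homogeneous polynomials. -/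
noncomputable def symAct {K : Type*} [Field K] (A : Matrix (Fin 2) (Fin 2) K) :
    MvPolynomial (Fin 2) K →ₐ[K] MvPolynomial (Fin 2) K :=
  MvPolynomial.aeval (fun i => ∑ j, MvPolynomial.C (A j i) * MvPolynomial.X j)

/-- The character `θ · det ρ`, equal to `η(g)η(τgτ⁻¹)` on `H` and
`η(τg)η(gτ⁻¹)` off `H`. -/
noncomputable def thetaDet {K : Type*} [Field K] {G : Type*} [Group G]
    (H : Subgroup G) (η : H →* Kˣ) (τ : G) (g : G) : K :=
  if g ∈ H then etaExt H η g * etaExt H η (τ * g * τ⁻¹)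
  else etaExt H η (τ * g) * etaExt H η (g * τ⁻¹)

/-!
For `g ∈ H` the matrix of `ρ(g)` is diagonal, `diag(a, b)`, and scales `x^(n-i) y^i` by
`a^(n-i) b^i = (ab)^i a^(n-2i)`; for `g ∉ H` it is antidiagonal and sends `x^(n-i) y^i` to
`(dc)^i d^(n-2i) x^i y^(n-i)`. Because `n - 2i ≠ 0`, the extension by zero of `η^(n-2i)` is the
`(n-2i)`-th power of that of `η`, so these scalars are exactly the entries of
`Ind η^(n-2i)` times `(θ·det ρ)^i`.
-/

section SymAct

variable {K : Type*} [Field K]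

lemma symAct_X_pow_mul_X_pow (A : Matrix (Fin 2) (Fin 2) K) (p q : ℕ) :
    symAct A (X 0 ^ p * X 1 ^ q) =
      (C (A 0 0) * X 0 + C (A 1 0) * X 1) ^ p * (C (A 0 1) * X 0 + C (A 1 1) * X 1) ^ q := by
  simp [symAct, Fin.sum_univ_two]

lemma symAct_diagonal (a b : K) (p q : ℕ) :
    symAct !![a, 0; 0, b] (X 0 ^ p * X 1 ^ q) = C (a ^ p * b ^ q) * (X 0 ^ p * X 1 ^ q) := by
  simp only [symAct_X_pow_mul_X_pow, of_apply, cons_val', cons_val_zero, cons_val_one,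
    empty_val', cons_val_fin_one, map_zero, zero_mul, add_zero, zero_add, mul_pow, C_mul, C_pow]
  ring

lemma symAct_antidiagonal (c d : K) (p q : ℕ) :
    symAct !![0, c; d, 0] (X 0 ^ p * X 1 ^ q) = C (d ^ p * c ^ q) * (X 0 ^ q * X 1 ^ p) := by
  simp only [symAct_X_pow_mul_X_pow, of_apply, cons_val', cons_val_zero, cons_val_one,
    empty_val', cons_val_fin_one, map_zero, zero_mul, add_zero, zero_add, mul_pow, C_mul, C_pow]
  ring

end SymAct

lemma etaExt_pow {K : Type*} [Field K] {G : Type*} [Group G] (H : Subgroup G) (η : H →* Kˣ)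
    {m : ℕ} (hm : m ≠ 0) (g : G) : etaExt H (η ^ m) g = etaExt H η g ^ m := by
  by_cases hg : g ∈ H <;> simp [etaExt, hg, hm]

lemma C_mul_add_mem_span_pair {σ R : Type*} [CommSemiring R] (α β γ : R)
    (v w : MvPolynomial σ R) :
    C α * (C β * v + C γ * w) ∈ Submodule.span R ({v, w} : Set (MvPolynomial σ R)) := by
  simp only [← smul_eq_C_mul]
  exact Submodule.smul_mem _ _ (Submodule.add_mem _
    (Submodule.smul_mem _ _ (Submodule.subset_span (Set.mem_insert _ _)))
    (Submodule.smul_mem _ _ (Submodule.subset_span (Set.mem_insert_of_mem _ rfl))))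

lemma symAct_indRep_plane {K : Type*} [Field K] {G : Type*} [Group G] (H : Subgroup G) (τ : G)
    (η : H →* Kˣ) {n i : ℕ} (hi : 2 * i < n) (g : G) :
    symAct (indRep H η τ g) (X 0 ^ (n - i) * X 1 ^ i) =
        C (thetaDet H η τ g ^ i) *
          (C (indRep H (η ^ (n - 2 * i)) τ g 0 0) * (X 0 ^ (n - i) * X 1 ^ i) +
           C (indRep H (η ^ (n - 2 * i)) τ g 1 0) * (X 0 ^ i * X 1 ^ (n - i))) ∧
      symAct (indRep H η τ g) (X 0 ^ i * X 1 ^ (n - i)) =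
        C (thetaDet H η τ g ^ i) *
          (C (indRep H (η ^ (n - 2 * i)) τ g 0 1) * (X 0 ^ (n - i) * X 1 ^ i) +
           C (indRep H (η ^ (n - 2 * i)) τ g 1 1) * (X 0 ^ i * X 1 ^ (n - i))) := by
  obtain ⟨k, rfl⟩ : ∃ k, n = 2 * i + (k + 1) := ⟨n - 2 * i - 1, by omega⟩
  have hk : 2 * i + (k + 1) - 2 * i = k + 1 := by omega
  have hki : 2 * i + (k + 1) - i = k + 1 + i := by omega
  by_cases hg : g ∈ H <;>
  · simp only [indRep, thetaDet, hg, if_true, if_false, hk, hki, etaExt_pow H η k.add_one_ne_zero,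
      symAct_diagonal, symAct_antidiagonal, of_apply, cons_val', cons_val_zero, cons_val_one,
      empty_val', cons_val_fin_one, map_zero, zero_mul, add_zero, zero_add, C_mul, C_pow]
    constructor <;> ring

theorem symPow_plane_summand_general
    {K : Type*} [Field K] {G : Type*} [Group G]
    (H : Subgroup G) (τ : G) (η : H →* Kˣ)
    (n : ℕ) (i : ℕ) (hi : 2 * i < n) :
    ∀ g : G,
      (symAct (indRep H η τ g) (X 0 ^ (n - i) * X 1 ^ i) ∈
        Submodule.span K
          ({X 0 ^ (n - i) * X 1 ^ i, X 0 ^ i * X 1 ^ (n - i)} :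
            Set (MvPolynomial (Fin 2) K))) ∧
      (symAct (indRep H η τ g) (X 0 ^ i * X 1 ^ (n - i)) ∈
        Submodule.span K
          ({X 0 ^ (n - i) * X 1 ^ i, X 0 ^ i * X 1 ^ (n - i)} :
            Set (MvPolynomial (Fin 2) K))) ∧
      (symAct (indRep H η τ g) (X 0 ^ (n - i) * X 1 ^ i) =
        C (thetaDet H η τ g ^ i) *
          (C (indRep H (η ^ (n - 2 * i)) τ g 0 0) * (X 0 ^ (n - i) * X 1 ^ i) +
           C (indRep H (η ^ (n - 2 * i)) τ g 1 0) * (X 0 ^ i * X 1 ^ (n - i)))) ∧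
      (symAct (indRep H η τ g) (X 0 ^ i * X 1 ^ (n - i)) =
        C (thetaDet H η τ g ^ i) *
          (C (indRep H (η ^ (n - 2 * i)) τ g 0 1) * (X 0 ^ (n - i) * X 1 ^ i) +
           C (indRep H (η ^ (n - 2 * i)) τ g 1 1) * (X 0 ^ i * X 1 ^ (n - i)))) := by
  intro g
  obtain ⟨first, second⟩ := symAct_indRep_plane H τ η hi g
  exact ⟨first ▸ C_mul_add_mem_span_pair _ _ _ _ _, second ▸ C_mul_add_mem_span_pair _ _ _ _ _,
    first, second⟩

/-- for `0 ≤ i < n/2`, the plane spanned by `v i = x^(n-i) y^i`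
and `v (n-i) = x^i y^(n-i)` in `Symⁿρ` is `G`-stable, and via the basis
`(v i, v (n-i)) ↔ (e₀, e₁)` it is isomorphic to
`(Ind_H^G η^(n-2i)) ⊗ (θ·det ρ)^i`. -/
theorem symPow_plane_summand
    {K : Type*} [Field K] [CharZero K] {G : Type*} [Group G]
    (H : Subgroup G) (hH : H.index = 2) (τ : G) (hτ : τ ∉ H) (η : H →* Kˣ)
    (n : ℕ) (hn : 2 ≤ n) (i : ℕ) (hi : 2 * i < n) :
    ∀ g : G,
      (symAct (indRep H η τ g) (X 0 ^ (n - i) * X 1 ^ i) ∈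
        Submodule.span K
          ({X 0 ^ (n - i) * X 1 ^ i, X 0 ^ i * X 1 ^ (n - i)} :
            Set (MvPolynomial (Fin 2) K))) ∧
      (symAct (indRep H η τ g) (X 0 ^ i * X 1 ^ (n - i)) ∈
        Submodule.span K
          ({X 0 ^ (n - i) * X 1 ^ i, X 0 ^ i * X 1 ^ (n - i)} :
            Set (MvPolynomial (Fin 2) K))) ∧
      (symAct (indRep H η τ g) (X 0 ^ (n - i) * X 1 ^ i) =
        C (thetaDet H η τ g ^ i) *
          (C (indRep H (η ^ (n - 2 * i)) τ g 0 0) * (X 0 ^ (n - i) * X 1 ^ i) +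
           C (indRep H (η ^ (n - 2 * i)) τ g 1 0) * (X 0 ^ i * X 1 ^ (n - i)))) ∧
      (symAct (indRep H η τ g) (X 0 ^ i * X 1 ^ (n - i)) =
        C (thetaDet H η τ g ^ i) *
          (C (indRep H (η ^ (n - 2 * i)) τ g 0 1) * (X 0 ^ (n - i) * X 1 ^ i) +
           C (indRep H (η ^ (n - 2 * i)) τ g 1 1) * (X 0 ^ i * X 1 ^ (n - i)))) :=
  symPow_plane_summand_general H τ η n i hi
end

section
/- Let n = 2m with m ≥ 1, and set ρ_n := (Symⁿρ) ⊗ (det ρ)^{−m}. Then there is an isomorphism of representations of G: ρ_n ≅ θ^m ⊕ ⨁_{i=0}^{m−1} (Ind_H^G η^{2(m−i)}) ⊗ θ^{i}·(det ρ)^{i−m}. -/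
open Matrix MvPolynomial
open scoped Classical

/-- The quadratic character `θ` attached to `H`: `1` on `H` and `-1` off `H`. -/
noncomputable def thetaChar {K : Type*} [Field K] {G : Type*} [Group G]
    (H : Subgroup G) (g : G) : K :=
  if g ∈ H then 1 else -1

/-! For `g ∈ H` the matrix `ρ(g)` is diagonal, `diag(a, b)`, so each monomial `x^p y^q` is an
eigenvector of `Symⁿρ(g)` with eigenvalue `a^p b^q`; twisting by `(ab)^{-m}` turns the eigenvalue
on `x^{2m-i} y^i` into `(ab)^{i-m} a^{2(m-i)}`. For `g ∉ H` the matrix is antidiagonal,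
`[[0, c], [d, 0]]`, so `Symⁿρ(g)` swaps `x^{2m-i} y^i` and `x^i y^{2m-i}`, and since
`det ρ(g) = -cd` the twist leaves the sign `(-1)^i = θ(g)^i`. Index two is what makes `ρ(g)` of
this shape with nonzero entries: `H` is normal, and `τg, gτ⁻¹ ∈ H` whenever `g ∉ H`. -/

section IndexTwo

variable {K : Type*} [Field K] {G : Type*} [Group G] {H : Subgroup G}

theorem etaExt_of_mem (η : H →* Kˣ) {x : G} (hx : x ∈ H) :
    etaExt H η x = ((η ⟨x, hx⟩ : Kˣ) : K) :=
  dif_pos hx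

theorem exists_indRep_pow_eq_diag (hH : H.index = 2) (τ : G) (η : H →* Kˣ) {g : G}
    (hg : g ∈ H) :
    ∃ a b : K, a ≠ 0 ∧ b ≠ 0 ∧ ∀ k : ℕ, indRep H (η ^ k) τ g = !![a ^ k, 0; 0, b ^ k] := by
  have hconj : τ * g * τ⁻¹ ∈ H := (Subgroup.normal_of_index_eq_two hH).conj_mem g hg τ
  refine ⟨η ⟨g, hg⟩, η ⟨_, hconj⟩, Units.ne_zero _, Units.ne_zero _, fun k => ?_⟩
  simp [indRep, hg, etaExt_of_mem _ hg, etaExt_of_mem _ hconj]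

theorem exists_indRep_pow_eq_antidiag (hH : H.index = 2) {τ : G} (hτ : τ ∉ H)
    (η : H →* Kˣ) {g : G} (hg : g ∉ H) :
    ∃ c d : K, c ≠ 0 ∧ d ≠ 0 ∧ ∀ k : ℕ, indRep H (η ^ k) τ g = !![0, c ^ k; d ^ k, 0] := by
  have hgτ : g * τ⁻¹ ∈ H := by simp [Subgroup.mul_mem_iff_of_index_two hH, hg, hτ]
  have hτg : τ * g ∈ H := by simp [Subgroup.mul_mem_iff_of_index_two hH, hg, hτ]
  refine ⟨η ⟨_, hgτ⟩, η ⟨_, hτg⟩, Units.ne_zero _, Units.ne_zero _, fun k => ?_⟩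
  simp [indRep, hg, etaExt_of_mem _ hgτ, etaExt_of_mem _ hτg]

end IndexTwo

section TwistedSymmetricPower

variable {K : Type*} [Field K]

theorem symAct_diag_monomial (a b : K) (p q : ℕ) :
    symAct !![a, 0; 0, b] ((X 0 : MvPolynomial (Fin 2) K) ^ p * X 1 ^ q) =
      C (a ^ p * b ^ q) * (X 0 ^ p * X 1 ^ q) := by
  simp [symAct, Fin.sum_univ_two, mul_pow]
  ring

theorem symAct_antidiag_monomial (c d : K) (p q : ℕ) :
    symAct !![0, c; d, 0] ((X 0 : MvPolynomial (Fin 2) K) ^ p * X 1 ^ q) =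
      C (d ^ p * c ^ q) * (X 0 ^ q * X 1 ^ p) := by
  simp [symAct, Fin.sum_univ_two, mul_pow]
  ring

theorem inv_pow_add_mul_pow_mul_pow {s p q : K} (hs : s * s = 1) (hp : p ≠ 0) (hq : q ≠ 0)
    (i k : ℕ) :
    (s * (p * q))⁻¹ ^ (i + k) * (p ^ (i + 2 * k) * q ^ i) =
      s ^ i * (s * (p * q))⁻¹ ^ k * p ^ (2 * k) := by
  have hs0 : s ≠ 0 := left_ne_zero_of_mul_eq_one hs
  have hsi : (s * s) ^ i = 1 := by rw [hs, one_pow]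
  rw [inv_pow, inv_pow]
  field_simp
  linear_combination (-(p ^ (i + 2 * k) * q ^ i * (s * p * q) ^ k)) * hsi

theorem twist_symAct_diag_left {a b : K} (ha : a ≠ 0) (hb : b ≠ 0) (i k : ℕ) :
    C ((!![a, 0; 0, b].det)⁻¹ ^ (i + k)) *
        symAct !![a, 0; 0, b] ((X 0 : MvPolynomial (Fin 2) K) ^ (i + 2 * k) * X 1 ^ i) =
      C ((!![a, 0; 0, b].det)⁻¹ ^ k * a ^ (2 * k)) * (X 0 ^ (i + 2 * k) * X 1 ^ i) := by
  rw [symAct_diag_monomial, ← mul_assoc, ← C_mul, det_fin_two_of,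
    show a * b - 0 * 0 = 1 * (a * b) by ring,
    inv_pow_add_mul_pow_mul_pow (one_mul 1) ha hb, one_pow, one_mul]

theorem twist_symAct_diag_right {a b : K} (ha : a ≠ 0) (hb : b ≠ 0) (i k : ℕ) :
    C ((!![a, 0; 0, b].det)⁻¹ ^ (i + k)) *
        symAct !![a, 0; 0, b] ((X 0 : MvPolynomial (Fin 2) K) ^ i * X 1 ^ (i + 2 * k)) =
      C ((!![a, 0; 0, b].det)⁻¹ ^ k * b ^ (2 * k)) * (X 0 ^ i * X 1 ^ (i + 2 * k)) := by
  rw [symAct_diag_monomial, ← mul_assoc, ← C_mul, det_fin_two_of, mul_comm (a ^ i),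
    show a * b - 0 * 0 = 1 * (b * a) by ring,
    inv_pow_add_mul_pow_mul_pow (one_mul 1) hb ha, one_pow, one_mul]

theorem twist_symAct_antidiag_left {c d : K} (hc : c ≠ 0) (hd : d ≠ 0) (i k : ℕ) :
    C ((!![0, c; d, 0].det)⁻¹ ^ (i + k)) *
        symAct !![0, c; d, 0] ((X 0 : MvPolynomial (Fin 2) K) ^ (i + 2 * k) * X 1 ^ i) =
      C ((-1) ^ i * (!![0, c; d, 0].det)⁻¹ ^ k * d ^ (2 * k)) *
        (X 0 ^ i * X 1 ^ (i + 2 * k)) := by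
  rw [symAct_antidiag_monomial, ← mul_assoc, ← C_mul, det_fin_two_of,
    show 0 * 0 - c * d = -1 * (d * c) by ring,
    inv_pow_add_mul_pow_mul_pow (by norm_num) hd hc]

theorem twist_symAct_antidiag_right {c d : K} (hc : c ≠ 0) (hd : d ≠ 0) (i k : ℕ) :
    C ((!![0, c; d, 0].det)⁻¹ ^ (i + k)) *
        symAct !![0, c; d, 0] ((X 0 : MvPolynomial (Fin 2) K) ^ i * X 1 ^ (i + 2 * k)) =
      C ((-1) ^ i * (!![0, c; d, 0].det)⁻¹ ^ k * c ^ (2 * k)) *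
        (X 0 ^ (i + 2 * k) * X 1 ^ i) := by
  rw [symAct_antidiag_monomial, ← mul_assoc, ← C_mul, det_fin_two_of, mul_comm (d ^ i),
    show 0 * 0 - c * d = -1 * (c * d) by ring,
    inv_pow_add_mul_pow_mul_pow (by norm_num) hc hd]

end TwistedSymmetricPower

theorem symPow_twist_decomposition_general
    {K : Type*} [Field K] {G : Type*} [Group G]
    (H : Subgroup G) (hH : H.index = 2) (τ : G) (hτ : τ ∉ H) (η : H →* Kˣ)
    (m : ℕ) :
    ∀ g : G,
      (C (((indRep H η τ g).det)⁻¹ ^ m) *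
          symAct (indRep H η τ g) (X 0 ^ m * X 1 ^ m) =
        C (thetaChar (K := K) H g ^ m) * (X 0 ^ m * X 1 ^ m)) ∧
      (∀ i : ℕ, i < m →
        (C (((indRep H η τ g).det)⁻¹ ^ m) *
            symAct (indRep H η τ g) (X 0 ^ (2 * m - i) * X 1 ^ i) =
          C (thetaChar (K := K) H g ^ i * ((indRep H η τ g).det)⁻¹ ^ (m - i)) *
            (C (indRep H (η ^ (2 * (m - i))) τ g 0 0) *
                (X 0 ^ (2 * m - i) * X 1 ^ i) +
             C (indRep H (η ^ (2 * (m - i))) τ g 1 0) *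
                (X 0 ^ i * X 1 ^ (2 * m - i)))) ∧
        (C (((indRep H η τ g).det)⁻¹ ^ m) *
            symAct (indRep H η τ g) (X 0 ^ i * X 1 ^ (2 * m - i)) =
          C (thetaChar (K := K) H g ^ i * ((indRep H η τ g).det)⁻¹ ^ (m - i)) *
            (C (indRep H (η ^ (2 * (m - i))) τ g 0 1) *
                (X 0 ^ (2 * m - i) * X 1 ^ i) +
             C (indRep H (η ^ (2 * (m - i))) τ g 1 1) *
                (X 0 ^ i * X 1 ^ (2 * m - i))))) := by
  intro g
  by_cases hg : g ∈ H
  · obtain ⟨a, b, ha, hb, hρ⟩ := exists_indRep_pow_eq_diag hH τ η hg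
    have hρ₁ : indRep H η τ g = !![a, 0; 0, b] := by
      rw [← pow_one η, hρ, pow_one, pow_one]
    have hθ : thetaChar (K := K) H g = 1 := if_pos hg
    -- the line `K · x^m y^m` is the degenerate block `i = m`, i.e. `k = 0`
    refine ⟨by simpa [hρ₁, hθ] using twist_symAct_diag_left ha hb m 0, fun i hi => ?_⟩
    obtain ⟨k, rfl⟩ := Nat.exists_eq_add_of_le hi.le
    rw [show 2 * (i + k) - i = i + 2 * k by omega, Nat.add_sub_cancel_left, hρ₁, hρ, hθ,
      twist_symAct_diag_left ha hb, twist_symAct_diag_right ha hb]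
    simp [mul_assoc]
  · obtain ⟨c, d, hc, hd, hρ⟩ := exists_indRep_pow_eq_antidiag hH hτ η hg
    have hρ₁ : indRep H η τ g = !![0, c; d, 0] := by
      rw [← pow_one η, hρ, pow_one, pow_one]
    have hθ : thetaChar (K := K) H g = -1 := if_neg hg
    refine ⟨by simpa [hρ₁, hθ] using twist_symAct_antidiag_left hc hd m 0, fun i hi => ?_⟩
    obtain ⟨k, rfl⟩ := Nat.exists_eq_add_of_le hi.le
    rw [show 2 * (i + k) - i = i + 2 * k by omega, Nat.add_sub_cancel_left, hρ₁, hρ, hθ,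
      twist_symAct_antidiag_left hc hd, twist_symAct_antidiag_right hc hd]
    simp [mul_assoc]

/-- for `n = 2m` (`m ≥ 1`), the twist
`ρ_n = (Symⁿρ) ⊗ (det ρ)^(−m)` — whose action on a degree-`n` homogeneous
polynomial `P` is `(det ρ(g))⁻¹^m • symAct (ρ(g)) P` — decomposes as
`θ^m ⊕ ⨁_{i=0}^{m-1} (Ind_H^G η^(2(m-i))) ⊗ θ^i (det ρ)^(i-m)`:
the line `K·x^m y^m` carries the character `θ^m`, and for each `i < m` the
plane spanned by `v i = x^(2m-i) y^i` and `v (n-i) = x^i y^(2m-i)`, via the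
basis `(v i, v (n-i)) ↔ (e₀, e₁)`, carries
`(Ind_H^G η^(2(m-i))) ⊗ θ^i (det ρ)^(i-m)`. -/
theorem symPow_twist_decomposition
    {K : Type*} [Field K] [CharZero K] {G : Type*} [Group G]
    (H : Subgroup G) (hH : H.index = 2) (τ : G) (hτ : τ ∉ H) (η : H →* Kˣ)
    (m : ℕ) (hm : 1 ≤ m) :
    ∀ g : G,
      (C (((indRep H η τ g).det)⁻¹ ^ m) *
          symAct (indRep H η τ g) (X 0 ^ m * X 1 ^ m) =
        C (thetaChar (K := K) H g ^ m) * (X 0 ^ m * X 1 ^ m)) ∧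
      (∀ i : ℕ, i < m →
        (C (((indRep H η τ g).det)⁻¹ ^ m) *
            symAct (indRep H η τ g) (X 0 ^ (2 * m - i) * X 1 ^ i) =
          C (thetaChar (K := K) H g ^ i * ((indRep H η τ g).det)⁻¹ ^ (m - i)) *
            (C (indRep H (η ^ (2 * (m - i))) τ g 0 0) *
                (X 0 ^ (2 * m - i) * X 1 ^ i) +
             C (indRep H (η ^ (2 * (m - i))) τ g 1 0) *
                (X 0 ^ i * X 1 ^ (2 * m - i)))) ∧
        (C (((indRep H η τ g).det)⁻¹ ^ m) *
            symAct (indRep H η τ g) (X 0 ^ i * X 1 ^ (2 * m - i)) =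
          C (thetaChar (K := K) H g ^ i * ((indRep H η τ g).det)⁻¹ ^ (m - i)) *
            (C (indRep H (η ^ (2 * (m - i))) τ g 0 1) *
                (X 0 ^ (2 * m - i) * X 1 ^ i) +
             C (indRep H (η ^ (2 * (m - i))) τ g 1 1) *
                (X 0 ^ i * X 1 ^ (2 * m - i))))) :=
  symPow_twist_decomposition_general H hH τ hτ η m
end

section
/- Let n = 2m+1 be odd with m ≥ 0. Then there is an isomorphism of representations of G: Symⁿρ ≅ ⨁_{i=0}^{m} (Ind_H^G η^{n−2i}) ⊗ (θ·det ρ)^{i}. In particular, no one-dimensional summand occurs in Symⁿρ for odd n. -/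
open Matrix MvPolynomial
open scoped Classical

/-! For `g ∈ H` the matrix `ρ(g)` is diagonal with entries `a, d`, and for `g ∉ H` it is
antidiagonal with entries `b, c`. Either way it sends `x^(k+i) y^i` and `x^i y^(k+i)` to multiples
of themselves or of each other, and the coefficients split as `a^(k+i) d^i = (ad)^i a^k` (resp.
`b^(k+i) c^i = (bc)^i b^k`): a power of `(θ · det ρ)(g)` times an entry of `Ind η^k`, with
`k = n - 2i`. Index two puts `τgτ⁻¹`, `τg` and `gτ⁻¹` in `H`, where `etaExt` is
multiplicative. -/

section SymAct

variable {K : Type*} [Field K]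

def SymActOnPlane (A B : Matrix (Fin 2) (Fin 2) K) (s : K) (k i : ℕ) : Prop :=
  symAct A (X 0 ^ (k + i) * X 1 ^ i) =
      C s * (C (B 0 0) * (X 0 ^ (k + i) * X 1 ^ i) + C (B 1 0) * (X 0 ^ i * X 1 ^ (k + i))) ∧
    symAct A (X 0 ^ i * X 1 ^ (k + i)) =
      C s * (C (B 0 1) * (X 0 ^ (k + i) * X 1 ^ i) + C (B 1 1) * (X 0 ^ i * X 1 ^ (k + i)))

theorem symAct_diagonal_monomial (a d : K) (p q : ℕ) :
    symAct !![a, 0; 0, d] (X 0 ^ p * X 1 ^ q) = C (a ^ p * d ^ q) * (X 0 ^ p * X 1 ^ q) := by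
  simp [symAct, Fin.sum_univ_two, mul_pow]
  ring

theorem symAct_antidiagonal_monomial (b c : K) (p q : ℕ) :
    symAct !![0, c; b, 0] (X 0 ^ p * X 1 ^ q) = C (b ^ p * c ^ q) * (X 0 ^ q * X 1 ^ p) := by
  simp [symAct, Fin.sum_univ_two, mul_pow]
  ring

theorem symActOnPlane_diagonal (a d : K) (k i : ℕ) :
    SymActOnPlane !![a, 0; 0, d] !![a ^ k, 0; 0, d ^ k] ((a * d) ^ i) k i := by
  constructor <;> simp [symAct_diagonal_monomial] <;> ring

theorem symActOnPlane_antidiagonal (b c : K) (k i : ℕ) :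
    SymActOnPlane !![0, c; b, 0] !![0, c ^ k; b ^ k, 0] ((b * c) ^ i) k i := by
  constructor <;> simp [symAct_antidiagonal_monomial] <;> ring

end SymAct

section IndRep

variable {K : Type*} [Field K] {G : Type*} [Group G] {H : Subgroup G} (η : H →* Kˣ) {τ g : G}

theorem etaExt_pow_s5 (hg : g ∈ H) (k : ℕ) : etaExt H (η ^ k) g = etaExt H η g ^ k := by
  simp [etaExt, hg]

theorem indRep_pow_of_mem (hg : g ∈ H) (hconj : τ * g * τ⁻¹ ∈ H) (k : ℕ) :
    indRep H (η ^ k) τ g = !![etaExt H η g ^ k, 0; 0, etaExt H η (τ * g * τ⁻¹) ^ k] := by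
  simp [indRep, hg, etaExt_pow_s5 η hg, etaExt_pow_s5 η hconj]

theorem indRep_pow_of_notMem (hg : g ∉ H) (hleft : τ * g ∈ H) (hright : g * τ⁻¹ ∈ H) (k : ℕ) :
    indRep H (η ^ k) τ g = !![0, etaExt H η (g * τ⁻¹) ^ k; etaExt H η (τ * g) ^ k, 0] := by
  simp [indRep, hg, etaExt_pow_s5 η hleft, etaExt_pow_s5 η hright]

theorem symActOnPlane_indRep_of_mem (hg : g ∈ H) (hconj : τ * g * τ⁻¹ ∈ H) (k i : ℕ) :
    SymActOnPlane (indRep H η τ g) (indRep H (η ^ k) τ g) (thetaDet H η τ g ^ i) k i := by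
  have hρ : indRep H η τ g = !![etaExt H η g, 0; 0, etaExt H η (τ * g * τ⁻¹)] := by
    simp [indRep, hg]
  rw [hρ, indRep_pow_of_mem η hg hconj, thetaDet, if_pos hg]
  exact symActOnPlane_diagonal _ _ k i

theorem symActOnPlane_indRep_of_notMem (hg : g ∉ H) (hleft : τ * g ∈ H) (hright : g * τ⁻¹ ∈ H)
    (k i : ℕ) :
    SymActOnPlane (indRep H η τ g) (indRep H (η ^ k) τ g) (thetaDet H η τ g ^ i) k i := by
  have hρ : indRep H η τ g = !![0, etaExt H η (g * τ⁻¹); etaExt H η (τ * g), 0] := by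
    simp [indRep, hg]
  rw [hρ, indRep_pow_of_notMem η hg hleft hright, thetaDet, if_neg hg]
  exact symActOnPlane_antidiagonal _ _ k i

theorem symActOnPlane_indRep (hH : H.index = 2) (hτ : τ ∉ H) (g : G) (k i : ℕ) :
    SymActOnPlane (indRep H η τ g) (indRep H (η ^ k) τ g) (thetaDet H η τ g ^ i) k i := by
  by_cases hg : g ∈ H
  · have hconj : τ * g * τ⁻¹ ∈ H := (Subgroup.normal_of_index_eq_two hH).conj_mem g hg τ
    exact symActOnPlane_indRep_of_mem η hg hconj k i
  · have hleft : τ * g ∈ H := (Subgroup.mul_mem_iff_of_index_two hH).2 (iff_of_false hτ hg)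
    have hright : g * τ⁻¹ ∈ H :=
      (Subgroup.mul_mem_iff_of_index_two hH).2 (iff_of_false hg (inv_mem_iff.not.2 hτ))
    exact symActOnPlane_indRep_of_notMem η hg hleft hright k i

end IndRep

theorem symPow_odd_decomposition_general
    {K : Type*} [Field K] {G : Type*} [Group G]
    (H : Subgroup G) (hH : H.index = 2) (τ : G) (hτ : τ ∉ H) (η : H →* Kˣ)
    (m : ℕ) :
    ∀ g : G, ∀ i : ℕ, i ≤ m →
      (symAct (indRep H η τ g) (X 0 ^ (2 * m + 1 - i) * X 1 ^ i) =
        C (thetaDet H η τ g ^ i) *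
          (C (indRep H (η ^ (2 * m + 1 - 2 * i)) τ g 0 0) *
              (X 0 ^ (2 * m + 1 - i) * X 1 ^ i) +
           C (indRep H (η ^ (2 * m + 1 - 2 * i)) τ g 1 0) *
              (X 0 ^ i * X 1 ^ (2 * m + 1 - i)))) ∧
      (symAct (indRep H η τ g) (X 0 ^ i * X 1 ^ (2 * m + 1 - i)) =
        C (thetaDet H η τ g ^ i) *
          (C (indRep H (η ^ (2 * m + 1 - 2 * i)) τ g 0 1) *
              (X 0 ^ (2 * m + 1 - i) * X 1 ^ i) +
           C (indRep H (η ^ (2 * m + 1 - 2 * i)) τ g 1 1) *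
              (X 0 ^ i * X 1 ^ (2 * m + 1 - i)))) := by
  intro g i hi
  rw [show 2 * m + 1 - i = (2 * m + 1 - 2 * i) + i by omega]
  exact symActOnPlane_indRep η hH hτ g (2 * m + 1 - 2 * i) i

/-- for odd `n = 2m + 1`,
`Symⁿρ ≅ ⨁_{i=0}^{m} (Ind_H^G η^(n-2i)) ⊗ (θ·det ρ)^i`: for each `0 ≤ i ≤ m`
the plane spanned by `v i = x^(n-i) y^i` and `v (n-i) = x^i y^(n-i)`, via the
basis `(v i, v (n-i)) ↔ (e₀, e₁)`, carries `(Ind_H^G η^(n-2i)) ⊗ (θ·det ρ)^i`;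
these planes exhaust the basis `v 0, …, v n`, so every summand is
two-dimensional and no one-dimensional summand occurs. -/
theorem symPow_odd_decomposition
    {K : Type*} [Field K] [CharZero K] {G : Type*} [Group G]
    (H : Subgroup G) (hH : H.index = 2) (τ : G) (hτ : τ ∉ H) (η : H →* Kˣ)
    (m : ℕ) :
    ∀ g : G, ∀ i : ℕ, i ≤ m →
      (symAct (indRep H η τ g) (X 0 ^ (2 * m + 1 - i) * X 1 ^ i) =
        C (thetaDet H η τ g ^ i) *
          (C (indRep H (η ^ (2 * m + 1 - 2 * i)) τ g 0 0) *
              (X 0 ^ (2 * m + 1 - i) * X 1 ^ i) +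
           C (indRep H (η ^ (2 * m + 1 - 2 * i)) τ g 1 0) *
              (X 0 ^ i * X 1 ^ (2 * m + 1 - i)))) ∧
      (symAct (indRep H η τ g) (X 0 ^ i * X 1 ^ (2 * m + 1 - i)) =
        C (thetaDet H η τ g ^ i) *
          (C (indRep H (η ^ (2 * m + 1 - 2 * i)) τ g 0 1) *
              (X 0 ^ (2 * m + 1 - i) * X 1 ^ i) +
           C (indRep H (η ^ (2 * m + 1 - 2 * i)) τ g 1 1) *
              (X 0 ^ i * X 1 ^ (2 * m + 1 - i)))) :=
  symPow_odd_decomposition_general H hH τ hτ η m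
end

section
/- Suppose K is equipped with a valuation v : Kˣ → ℚ. Let D be a subgroup of G, and suppose there exist M ∈ GL₂(K) and characters χ₁, χ₂ : D → Kˣ such that for every d ∈ D the matrix M ρ(d) M⁻¹ is upper triangular with diagonal entries χ₁(d), χ₂(d). If there exists d₀ ∈ D with v(χ₁(d₀)) ≠ v(χ₂(d₀)), then D ⊆ H. (This encodes the fact that a p-ordinary newform with complex multiplication by an imaginary quadratic field F and level prime to p forces p to split in F: the decomposition group G_p, on which ρ_f is upper triangular with an unramified character δ of valuation 0 and a character of valuation k−1 > 0 on Frobenius, must lie in G_F.) -/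
open Matrix
open scoped Classical

/-!
For `g ∉ H` the matrix `ρ(g)` is antidiagonal, so it has trace zero; conjugating into upper
triangular form then gives `χ₂(d) = -χ₁(d)`, hence `v(χ₁ d) = v(χ₂ d)`, for every `d ∈ D \ H`.
If `D ⊄ H`, the elements of `D \ H` generate `D`, so the homomorphism `d ↦ v(χ₁ d) - v(χ₂ d)`,
which vanishes on them, vanishes on all of `D`, contradicting the choice of `d₀`.
-/

theorem Subgroup.eq_top_of_forall_notMem {G : Type*} [Group G] {H K : Subgroup G}
    (hH : H ≠ ⊤) (hK : ∀ g ∉ H, g ∈ K) : K = ⊤ := by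
  obtain ⟨g, hg⟩ : ∃ g, g ∉ H := by simpa [Subgroup.eq_top_iff'] using hH
  refine K.eq_top_iff'.2 fun x => ?_
  by_cases hx : x ∈ H
  · simpa using K.mul_mem (hK _ ((H.mul_mem_cancel_left hx).not.2 hg)) (K.inv_mem (hK g hg))
  · exact hK x hx

theorem Matrix.conj_zero_zero_add_conj_one_one_eq_trace {K : Type*} [Field K]
    (M : GL (Fin 2) K) (A : Matrix (Fin 2) (Fin 2) K) :
    (M * A * ((M⁻¹ : GL (Fin 2) K) : Matrix (Fin 2) (Fin 2) K)) 0 0 +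
      (M * A * ((M⁻¹ : GL (Fin 2) K) : Matrix (Fin 2) (Fin 2) K)) 1 1 = A.trace := by
  rw [← Matrix.trace_fin_two, Matrix.trace_units_conj]

theorem trace_indRep_of_notMem {K : Type*} [Field K] {G : Type*} [Group G]
    (H : Subgroup G) (η : H →* Kˣ) (τ : G) {g : G} (hg : g ∉ H) :
    (indRep H η τ g).trace = 0 := by
  simp [indRep, hg, Matrix.trace_fin_two]

theorem apply_neg_eq_of_map_mul {M : Type*} [Monoid M] [HasDistribNeg M] {v : M → ℚ}
    (hv : ∀ x y : M, v (x * y) = v x + v y) (x : M) : v (-x) = v x := by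
  have h1 : v 1 = 0 := by have := hv 1 1; rw [mul_one] at this; linarith
  have hm1 : v (-1) = 0 := by
    have := hv (-1) (-1)
    rw [neg_one_mul, neg_neg] at this
    linarith
  rw [← neg_one_mul, hv, hm1, zero_add]

theorem decomposition_group_in_CM_field_general
    {K : Type*} [Field K] {G : Type*} [Group G]
    (H : Subgroup G) (τ : G) (η : H →* Kˣ)
    (v : Kˣ → ℚ) (hv : ∀ x y : Kˣ, v (x * y) = v x + v y)
    (D : Subgroup G) (M : GL (Fin 2) K) (χ₁ χ₂ : D →* Kˣ)
    (htri : ∀ d : D,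
      ((M : Matrix (Fin 2) (Fin 2) K) * indRep H η τ (d : G) *
          ((M⁻¹ : GL (Fin 2) K) : Matrix (Fin 2) (Fin 2) K)) 0 0 = (χ₁ d : K) ∧
      ((M : Matrix (Fin 2) (Fin 2) K) * indRep H η τ (d : G) *
          ((M⁻¹ : GL (Fin 2) K) : Matrix (Fin 2) (Fin 2) K)) 1 0 = 0 ∧
      ((M : Matrix (Fin 2) (Fin 2) K) * indRep H η τ (d : G) *
          ((M⁻¹ : GL (Fin 2) K) : Matrix (Fin 2) (Fin 2) K)) 1 1 = (χ₂ d : K))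
    (hd₀ : ∃ d₀ : D, v (χ₁ d₀) ≠ v (χ₂ d₀)) :
    D ≤ H := by
  obtain ⟨d₀, hd₀⟩ := hd₀
  let vHom : Kˣ →* Multiplicative ℚ := MonoidHom.mk' (fun x => .ofAdd (v x)) hv
  have hker (d : D) : d ∈ (vHom.comp χ₁ / vHom.comp χ₂).ker ↔ v (χ₁ d) = v (χ₂ d) := by
    rw [MonoidHom.mem_ker, MonoidHom.div_apply, div_eq_one]
    exact Multiplicative.ofAdd.injective.eq_iff
  have hoff (d : D) (hd : d ∉ H.subgroupOf D) : v (χ₁ d) = v (χ₂ d) := by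
    obtain ⟨h00, -, h11⟩ := htri d
    have hsum := Matrix.conj_zero_zero_add_conj_one_one_eq_trace M (indRep H η τ d)
    rw [h00, h11, trace_indRep_of_notMem H η τ (mt Subgroup.mem_subgroupOf.2 hd),
      add_eq_zero_iff_eq_neg, ← Units.val_neg, Units.val_inj] at hsum
    rw [hsum, apply_neg_eq_of_map_mul hv]
  by_contra hDH
  have hker_top := Subgroup.eq_top_of_forall_notMem (mt Subgroup.subgroupOf_eq_top.1 hDH)
    fun d hd => (hker d).2 (hoff d hd)
  exact hd₀ ((hker d₀).1 (hker_top ▸ Subgroup.mem_top d₀))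

/-- if on a subgroup `D ≤ G` the induced representation `ρ` can be
simultaneously conjugated (by some `M ∈ GL₂(K)`) into upper-triangular form
with diagonal characters `χ₁, χ₂ : D → Kˣ`, and some `d₀ ∈ D` has
`v(χ₁(d₀)) ≠ v(χ₂(d₀))` for a valuation `v : Kˣ → ℚ`, then `D ⊆ H`.
(This encodes that a `p`-ordinary CM newform of level prime to `p` forces `p`
to split in the CM field: the decomposition group must lie in `G_F`.) -/
theorem decomposition_group_in_CM_field
    {K : Type*} [Field K] [CharZero K] {G : Type*} [Group G]
    (H : Subgroup G) (hH : H.index = 2) (τ : G) (hτ : τ ∉ H) (η : H →* Kˣ)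
    (v : Kˣ → ℚ) (hv : ∀ x y : Kˣ, v (x * y) = v x + v y)
    (D : Subgroup G) (M : GL (Fin 2) K) (χ₁ χ₂ : D →* Kˣ)
    (htri : ∀ d : D,
      ((M : Matrix (Fin 2) (Fin 2) K) * indRep H η τ (d : G) *
          ((M⁻¹ : GL (Fin 2) K) : Matrix (Fin 2) (Fin 2) K)) 0 0 = (χ₁ d : K) ∧
      ((M : Matrix (Fin 2) (Fin 2) K) * indRep H η τ (d : G) *
          ((M⁻¹ : GL (Fin 2) K) : Matrix (Fin 2) (Fin 2) K)) 1 0 = 0 ∧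
      ((M : Matrix (Fin 2) (Fin 2) K) * indRep H η τ (d : G) *
          ((M⁻¹ : GL (Fin 2) K) : Matrix (Fin 2) (Fin 2) K)) 1 1 = (χ₂ d : K))
    (hd₀ : ∃ d₀ : D, v (χ₁ d₀) ≠ v (χ₂ d₀)) :
    D ≤ H :=
  decomposition_group_in_CM_field_general H τ η v hv D M χ₁ χ₂ htri hd₀
end
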